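/- arXiv:1804.06097 — 2 statements merged into one kernel-verified Lean document; each statement's English description precedes it below -/
import Mathlib

section
/- Let q ∈ (1,∞), let q' := q/(q−1), and let κ ≥ 0. There is a constant c > 0 depending only on q such that for all a ≥ 0, λ ≥ 0 and t ≥ 0: ρ_a(λ t) ≤ c · max{λ^q, λ²} · ρ_a(t), and (ρ_a)*(λ t) ≤ c · max{λ^{q'}, λ²} · (ρ_a)*(t). -/
/-- The shifted `N`-function `ρ_a(t) = ∫₀ᵗ (κ+a+τ)^{q−2} τ dτ` associated with
`ρ(t) = ∫₀ᵗ (κ+s)^{q−2} s ds`. -/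
noncomputable def rhoShift (κ q a t : ℝ) : ℝ :=
  ∫ τ in (0:ℝ)..t, (κ + a + τ) ^ (q - 2) * τ

/-- The convex conjugate `(ρ_a)*(t) = sup_{s ≥ 0} (s t − ρ_a(s))`. -/
noncomputable def rhoShiftConj (κ q a t : ℝ) : ℝ :=
  sSup {v : ℝ | ∃ s : ℝ, 0 ≤ s ∧ v = s * t - rhoShift κ q a s}

/-!
Substituting `τ = λσ` gives `ρ_a(λt) = ∫₀ᵗ λ² (κ+a+λσ)^{q−2} σ dσ`, and `κ+a+λσ` lies between
`min{1,λ}` and `max{1,λ}` times `κ+a+σ`, so the integrand grows at most by the factor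
`max{λ^q, λ²}`; hence `c = 1` works. Applied with `1/μ`, this is the lower bound
`min{μ^q, μ²} ρ_a(u) ≤ ρ_a(μu)`. For the conjugate, substitute `s = μu` in the supremum, with
`μ = λ^{1/(r−1)}` for the exponent `r ∈ {q, 2}` minimising `λ^r`: the lower bound gives
`sλt − ρ_a(s) ≤ λ^{r'} (ut − ρ_a(u))`, and `r' ∈ {q', 2}`.
-/

noncomputable def nonnegConj (φ : ℝ → ℝ) (t : ℝ) : ℝ :=
  sSup {v : ℝ | ∃ s : ℝ, 0 ≤ s ∧ v = s * t - φ s}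

open Set Filter Real intervalIntegral

section nonnegConj

variable {φ : ℝ → ℝ} {t : ℝ}

theorem bddAbove_nonnegConj_set (hφ : ∀ s, 0 ≤ s → 0 ≤ φ s) (ht : 0 ≤ t)
    (hgrowth : ∀ᶠ s in atTop, s * t ≤ φ s) :
    BddAbove {v : ℝ | ∃ s : ℝ, 0 ≤ s ∧ v = s * t - φ s} := by
  obtain ⟨K, hK⟩ := eventually_atTop.1 hgrowth
  refine ⟨max K 0 * t, ?_⟩
  rintro _ ⟨s, hs, rfl⟩
  rcases le_total K s with hKs | hsK
  · linarith [hK s hKs, mul_nonneg (le_max_right K 0) ht]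
  · linarith [hφ s hs, mul_le_mul_of_nonneg_right (hsK.trans (le_max_left K 0)) ht]

theorem sub_le_nonnegConj (hbdd : BddAbove {v : ℝ | ∃ s : ℝ, 0 ≤ s ∧ v = s * t - φ s})
    {s : ℝ} (hs : 0 ≤ s) : s * t - φ s ≤ nonnegConj φ t :=
  le_csSup hbdd ⟨s, hs, rfl⟩

theorem nonnegConj_nonneg (h0 : φ 0 = 0)
    (hbdd : BddAbove {v : ℝ | ∃ s : ℝ, 0 ≤ s ∧ v = s * t - φ s}) : 0 ≤ nonnegConj φ t := by
  simpa [h0] using sub_le_nonnegConj hbdd le_rfl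

theorem nonnegConj_zero_le (hφ : ∀ s, 0 ≤ s → 0 ≤ φ s) : nonnegConj φ 0 ≤ 0 :=
  csSup_le ⟨_, 0, le_rfl, rfl⟩ <| by
    rintro _ ⟨s, hs, rfl⟩
    linarith [hφ s hs]

theorem nonnegConj_mul_le {μ lam : ℝ} (hμ : 0 < μ) (hlam : 0 ≤ lam)
    (hbdd : BddAbove {v : ℝ | ∃ s : ℝ, 0 ≤ s ∧ v = s * t - φ s})
    (hφ : ∀ u, 0 ≤ u → μ * lam * φ u ≤ φ (μ * u)) :
    nonnegConj φ (lam * t) ≤ μ * lam * nonnegConj φ t := by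
  refine csSup_le ⟨_, 0, le_rfl, rfl⟩ ?_
  rintro _ ⟨s, hs, rfl⟩
  obtain ⟨u, hu, rfl⟩ : ∃ u, 0 ≤ u ∧ s = μ * u :=
    ⟨s / μ, div_nonneg hs hμ.le, by field_simp⟩
  calc μ * u * (lam * t) - φ (μ * u) ≤ μ * lam * (u * t - φ u) := by linarith [hφ u hu]
    _ ≤ μ * lam * nonnegConj φ t :=
      mul_le_mul_of_nonneg_left (sub_le_nonnegConj hbdd hu) (by positivity)

end nonnegConj

theorem rpow_add_mul_le {b s lam : ℝ} (e : ℝ) (hb : 0 ≤ b) (hs : 0 ≤ s) (hbs : 0 < b + s)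
    (hlam : 0 < lam) : (b + lam * s) ^ e ≤ max (lam ^ e) 1 * (b + s) ^ e := by
  suffices (b + lam * s) ^ e ≤ lam ^ e * (b + s) ^ e ∨ (b + lam * s) ^ e ≤ (b + s) ^ e by
    rcases this with h | h
    · exact h.trans (mul_le_mul_of_nonneg_right (le_max_left _ _) (by positivity))
    · exact h.trans (le_mul_of_one_le_left (by positivity) (le_max_right _ _))
  rw [← mul_rpow hlam.le hbs.le]
  rcases le_total 1 lam with h1 | h1 <;> rcases le_total 0 e with he | he
  · exact .inl (rpow_le_rpow (by positivity) (by nlinarith) he)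
  · exact .inr (rpow_le_rpow_of_nonpos hbs (by nlinarith) he)
  · exact .inr (rpow_le_rpow (by positivity) (by nlinarith) he)
  · exact .inl (rpow_le_rpow_of_nonpos (by positivity) (by nlinarith) he)

/-- `μ = λ^{1/(r−1)}` with `r ∈ {q, 2}` chosen so that `λ^r = min{λ^q, λ²}`; then `μλ = λ^{r'}`. -/
theorem exists_mul_le_min_rpow {q lam : ℝ} (hq : 1 < q) (hlam : 0 < lam) :
    ∃ μ > 0, μ * lam ≤ min (μ ^ q) (μ ^ (2:ℝ)) ∧
      μ * lam ≤ max (lam ^ (q / (q - 1))) (lam ^ (2:ℝ)) := by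
  obtain ⟨r, hr, hrq, hr2⟩ : ∃ r, (r = q ∨ r = 2) ∧ lam ^ r ≤ lam ^ q ∧ lam ^ r ≤ lam ^ (2:ℝ) := by
    rcases le_total (lam ^ q) (lam ^ (2:ℝ)) with h | h
    · exact ⟨q, .inl rfl, le_rfl, h⟩
    · exact ⟨2, .inr rfl, h, le_rfl⟩
  have hr1 : 0 < r - 1 := by rcases hr with rfl | rfl <;> linarith
  set μ := lam ^ (r - 1)⁻¹
  have hμlam : μ * lam = lam ^ (r / (r - 1)) := by
    rw [← rpow_add_one hlam.ne']
    congr 1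
    field_simp
    ring
  have hμpow : ∀ e : ℝ, μ ^ e = (lam ^ e) ^ (r - 1)⁻¹ := fun e => by
    rw [← rpow_mul hlam.le, ← rpow_mul hlam.le, mul_comm]
  have hμr : μ * lam = μ ^ r := by rw [hμlam, hμpow, ← rpow_mul hlam.le, div_eq_mul_inv]
  have hmono : ∀ e : ℝ, lam ^ r ≤ lam ^ e → μ ^ r ≤ μ ^ e := fun e he => by
    rw [hμpow, hμpow]; exact rpow_le_rpow (by positivity) he (by positivity)
  refine ⟨μ, by positivity, hμr ▸ le_min (hmono q hrq) (hmono 2 hr2), hμlam ▸ ?_⟩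
  rcases hr with rfl | rfl
  · exact le_max_left _ _
  · norm_num

section rhoShift

variable {κ q a : ℝ}

theorem rhoShiftConj_eq_nonnegConj : rhoShiftConj κ q a = nonnegConj (rhoShift κ q a) := rfl

theorem continuousOn_rhoShift_integrand (hq : 1 < q) (hb : 0 ≤ κ + a) :
    ContinuousOn (fun τ : ℝ => (κ + a + τ) ^ (q - 2) * τ) (Ici 0) := by
  rcases hb.eq_or_lt with hb | hb
  -- for `q < 2` the factor `τ ^ (q - 2)` is singular at `0`, but the product is `τ ^ (q - 1)`
  · have h : EqOn (fun τ : ℝ => (κ + a + τ) ^ (q - 2) * τ) (fun τ => τ ^ (q - 1)) (Ici 0) := by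
      intro τ (hτ : 0 ≤ τ)
      rcases hτ.eq_or_lt with rfl | hτ
      · simp [zero_rpow (by linarith : q - 1 ≠ 0)]
      · dsimp only
        rw [← hb, zero_add, ← rpow_add_one hτ.ne']
        ring_nf
    exact (continuous_rpow_const (by linarith)).continuousOn.congr h
  · refine ContinuousOn.mul (fun τ (hτ : 0 ≤ τ) => ?_) continuousOn_id
    exact ((continuous_const.add continuous_id).continuousAt.rpow_const
      (.inl (add_pos_of_pos_of_nonneg hb hτ).ne')).continuousWithinAt

theorem rhoShift_zero : rhoShift κ q a 0 = 0 := integral_same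

theorem rhoShift_nonneg (hb : 0 ≤ κ + a) {t : ℝ} (ht : 0 ≤ t) : 0 ≤ rhoShift κ q a t :=
  integral_nonneg ht fun τ hτ => by
    have : 0 ≤ τ := hτ.1
    positivity

theorem rhoShift_one_pos (hq : 1 < q) (hb : 0 ≤ κ + a) : 0 < rhoShift κ q a 1 :=
  intervalIntegral_pos_of_pos_on
    ((continuousOn_rhoShift_integrand hq hb).mono Icc_subset_Ici_self
      |>.intervalIntegrable_of_Icc zero_le_one)
    (fun τ hτ => by
      have : 0 < τ := hτ.1
      positivity)
    zero_lt_one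

theorem rhoShift_integrand_scale_le (hb : 0 ≤ κ + a) {lam s : ℝ} (hlam : 0 < lam) (hs : 0 ≤ s) :
    lam * ((κ + a + lam * s) ^ (q - 2) * (lam * s)) ≤
      max (lam ^ q) (lam ^ (2:ℝ)) * ((κ + a + s) ^ (q - 2) * s) := by
  rcases hs.eq_or_lt with rfl | hs
  · simp
  have hmax : lam ^ (2:ℝ) * max (lam ^ (q - 2)) 1 = max (lam ^ q) (lam ^ (2:ℝ)) := by
    rw [mul_max_of_nonneg _ _ (by positivity), ← rpow_add hlam, mul_one]
    ring_nf
  calc lam * ((κ + a + lam * s) ^ (q - 2) * (lam * s))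
      = lam ^ (2:ℝ) * (κ + a + lam * s) ^ (q - 2) * s := by rw [rpow_two]; ring
    _ ≤ lam ^ (2:ℝ) * (max (lam ^ (q - 2)) 1 * (κ + a + s) ^ (q - 2)) * s := by
      gcongr
      exact rpow_add_mul_le _ hb hs.le (by linarith) hlam
    _ = max (lam ^ q) (lam ^ (2:ℝ)) * ((κ + a + s) ^ (q - 2) * s) := by rw [← hmax]; ring

theorem rhoShift_mul_le (hq : 1 < q) (hb : 0 ≤ κ + a) {lam t : ℝ} (hlam : 0 ≤ lam)
    (ht : 0 ≤ t) : rhoShift κ q a (lam * t) ≤ max (lam ^ q) (lam ^ (2:ℝ)) * rhoShift κ q a t := by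
  rcases hlam.eq_or_lt with rfl | hlam
  · simp [rhoShift_zero, zero_rpow (by linarith : q ≠ 0)]
  have hsubst : rhoShift κ q a (lam * t) =
      ∫ s in (0:ℝ)..t, lam * ((κ + a + lam * s) ^ (q - 2) * (lam * s)) := by
    have h := smul_integral_comp_mul_left (fun τ => (κ + a + τ) ^ (q - 2) * τ) lam (a := 0) (b := t)
    rw [mul_zero, smul_eq_mul] at h
    rw [integral_const_mul, h]
    rfl
  have hcont := continuousOn_rhoShift_integrand hq hb
  rw [hsubst, rhoShift, ← integral_const_mul]
  refine integral_mono_on ht ?_ ?_ fun s hs => rhoShift_integrand_scale_le hb hlam hs.1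
  · refine (continuousOn_const.mul ?_).intervalIntegrable_of_Icc ht
    exact hcont.comp (continuous_const_mul lam).continuousOn fun s hs => mul_nonneg hlam.le hs.1
  · exact (continuousOn_const.mul (hcont.mono Icc_subset_Ici_self)).intervalIntegrable_of_Icc ht

theorem min_rpow_mul_rhoShift_le (hq : 1 < q) (hb : 0 ≤ κ + a) {μ u : ℝ} (hμ : 0 < μ)
    (hu : 0 ≤ u) : min (μ ^ q) (μ ^ (2:ℝ)) * rhoShift κ q a u ≤ rhoShift κ q a (μ * u) := by
  have h := rhoShift_mul_le hq hb (inv_nonneg.2 hμ.le) (mul_nonneg hμ.le hu)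
  rw [inv_mul_cancel_left₀ hμ.ne', inv_rpow hμ.le, inv_rpow hμ.le] at h
  have hmin : min (μ ^ q) (μ ^ (2:ℝ)) * max (μ ^ q)⁻¹ (μ ^ (2:ℝ))⁻¹ ≤ 1 := by
    rw [mul_max_of_nonneg _ _ (by positivity)]
    exact max_le (mul_inv_le_one_of_le₀ (min_le_left _ _) (by positivity))
      (mul_inv_le_one_of_le₀ (min_le_right _ _) (by positivity))
  calc min (μ ^ q) (μ ^ (2:ℝ)) * rhoShift κ q a u
      ≤ min (μ ^ q) (μ ^ (2:ℝ)) * (max (μ ^ q)⁻¹ (μ ^ (2:ℝ))⁻¹ * rhoShift κ q a (μ * u)) :=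
        mul_le_mul_of_nonneg_left h (by positivity)
    _ ≤ rhoShift κ q a (μ * u) := by
      rw [← mul_assoc]
      exact mul_le_of_le_one_left (rhoShift_nonneg hb (by positivity)) hmin

theorem eventually_mul_le_mul_rpow {c e : ℝ} (hc : 0 < c) (he : 1 < e) (t : ℝ) :
    ∀ᶠ s in atTop, s * t ≤ c * s ^ e := by
  filter_upwards [(tendsto_rpow_atTop (sub_pos.2 he)).eventually_ge_atTop (t / c),
    eventually_gt_atTop 0] with s hs hs0
  calc s * t ≤ s * (c * s ^ (e - 1)) := by
        gcongr
        rwa [div_le_iff₀' hc] at hs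
    _ = c * s ^ e := by
        rw [rpow_sub_one hs0.ne']
        field_simp

theorem eventually_mul_le_rhoShift (hq : 1 < q) (hb : 0 ≤ κ + a) (t : ℝ) :
    ∀ᶠ s in atTop, s * t ≤ rhoShift κ q a s := by
  have h1 := rhoShift_one_pos hq hb
  filter_upwards [eventually_mul_le_mul_rpow h1 hq t,
    eventually_mul_le_mul_rpow h1 one_lt_two t, eventually_gt_atTop 0] with s hsq hs2 hs
  calc s * t ≤ rhoShift κ q a 1 * min (s ^ q) (s ^ (2:ℝ)) := by
        rw [mul_min_of_nonneg _ _ h1.le]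
        exact le_min hsq hs2
    _ ≤ rhoShift κ q a (s * 1) := by
        rw [mul_comm]
        exact min_rpow_mul_rhoShift_le hq hb hs zero_le_one
    _ = rhoShift κ q a s := by rw [mul_one]

theorem rhoShiftConj_mul_le (hq : 1 < q) (hb : 0 ≤ κ + a) {lam t : ℝ} (hlam : 0 ≤ lam)
    (ht : 0 ≤ t) : rhoShiftConj κ q a (lam * t) ≤
      max (lam ^ (q / (q - 1))) (lam ^ (2:ℝ)) * rhoShiftConj κ q a t := by
  rw [rhoShiftConj_eq_nonnegConj]
  have hφ : ∀ s, 0 ≤ s → 0 ≤ rhoShift κ q a s := fun s hs => rhoShift_nonneg hb hs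
  rcases hlam.eq_or_lt with rfl | hlam
  · rw [zero_mul, zero_rpow (div_pos (by linarith) (by linarith)).ne', zero_rpow two_ne_zero,
      max_self, zero_mul]
    exact nonnegConj_zero_le hφ
  obtain ⟨μ, hμ, hmin, hmax⟩ := exists_mul_le_min_rpow hq hlam
  have hbdd := bddAbove_nonnegConj_set hφ ht (eventually_mul_le_rhoShift hq hb t)
  calc nonnegConj (rhoShift κ q a) (lam * t) ≤ μ * lam * nonnegConj (rhoShift κ q a) t :=
        nonnegConj_mul_le hμ hlam.le hbdd fun u hu =>
          (mul_le_mul_of_nonneg_right hmin (hφ u hu)).trans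
            (min_rpow_mul_rhoShift_le hq hb hμ hu)
    _ ≤ max (lam ^ (q / (q - 1))) (lam ^ (2:ℝ)) * nonnegConj (rhoShift κ q a) t :=
        mul_le_mul_of_nonneg_right hmax (nonnegConj_nonneg rhoShift_zero hbdd)

end rhoShift

/-- (Lemma `lem:shiftedindex`.)
Let `q ∈ (1,∞)`, `q' := q/(q−1)`, `κ ≥ 0`. There is `c > 0` depending only on `q` such
that for all `a, λ, t ≥ 0`:
`ρ_a(λ t) ≤ c max{λ^q, λ²} ρ_a(t)` and `(ρ_a)*(λ t) ≤ c max{λ^{q'}, λ²} (ρ_a)*(t)`. -/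
theorem stmt17 (q : ℝ) (hq : 1 < q) :
    ∃ c : ℝ, 0 < c ∧ ∀ κ : ℝ, 0 ≤ κ →
      ∀ a lam t : ℝ, 0 ≤ a → 0 ≤ lam → 0 ≤ t →
        rhoShift κ q a (lam * t) ≤
          c * max (lam ^ q) (lam ^ (2:ℝ)) * rhoShift κ q a t ∧
        rhoShiftConj κ q a (lam * t) ≤
          c * max (lam ^ (q / (q - 1))) (lam ^ (2:ℝ)) * rhoShiftConj κ q a t := by
  refine ⟨1, one_pos, fun κ hκ a lam t ha hlam ht => ?_⟩
  have hb : 0 ≤ κ + a := add_nonneg hκ ha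
  rw [one_mul, one_mul]
  exact ⟨rhoShift_mul_le hq hb hlam ht, rhoShiftConj_mul_le hq hb hlam ht⟩
end

section
/- Let E ⊂ ℝⁿ be Lebesgue measurable with 0 < |E| < ∞, let κ ∈ [0,1], and let q : E → (1,∞) be measurable with 1 < q⁻ := ess inf q ≤ ess sup q =: q⁺ < ∞. Then there is a constant c > 0 depending only on q⁻ and q⁺ such that for every Q ∈ ℝ^{N×n}: |Q|^{q⁻} ≤ c ( |⨍_E (κ + |Q|)^{(q(x)−2)/2} Q dx|² + 1 ). -/
open MeasureTheory Set

/-!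
For `b ≥ 1` the weight `b ^ ((q x - 2) / 2)` is at least `b ^ ((q⁻ - 2) / 2)` wherever
`q x ≥ q⁻`, so the average is a scalar multiple of `Q` of norm at least
`(κ + |Q|) ^ ((q⁻ - 2) / 2) |Q|`. Once `|Q| ≥ 1`, `κ + |Q|` lies between `|Q|` and `2|Q|`,
so the square of this is comparable to `|Q| ^ q⁻`; for `|Q| < 1` the left side is at most `1`.
-/

section Average

variable {X : Type*} [MeasurableSpace X] {μ : Measure X} {s : Set X}

lemma setAverage_smul_const {V : Type*} [NormedAddCommGroup V] [NormedSpace ℝ V]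
    [CompleteSpace V] (f : X → ℝ) (v : V) :
    ⨍ x in s, f x • v ∂μ = (⨍ x in s, f x ∂μ) • v :=
  integral_smul_const f v

lemma le_setAverage_of_ae_le {f : X → ℝ} {a : ℝ} (hs₀ : μ s ≠ 0) (hs : μ s ≠ ⊤)
    (hf : IntegrableOn f s μ) (ha : ∀ᵐ x ∂μ.restrict s, a ≤ f x) :
    a ≤ ⨍ x in s, f x ∂μ := by
  calc a = ⨍ _ in s, a ∂μ := (setAverage_const hs₀ hs a).symm
    _ ≤ ⨍ x in s, f x ∂μ := by
      simp only [setAverage_eq]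
      exact smul_le_smul_of_nonneg_left
        (integral_mono_ae (integrableOn_const hs) hf ha) (inv_nonneg.2 measureReal_nonneg)

lemma rpow_le_setAverage_rpow {b α β : ℝ} {g : X → ℝ} (hb : 1 ≤ b) (hg : Measurable g)
    (hs₀ : μ s ≠ 0) (hs : μ s ≠ ⊤)
    (hαβ : ∀ᵐ x ∂μ.restrict s, α ≤ g x ∧ g x ≤ β) :
    b ^ α ≤ ⨍ x in s, b ^ g x ∂μ := by
  have hint : IntegrableOn (fun x ↦ b ^ g x) s μ := by
    refine .of_bound hs.lt_top (measurable_const.pow hg).aestronglyMeasurable (b ^ β) ?_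
    filter_upwards [hαβ] with x hx
    rw [Real.norm_of_nonneg (by positivity)]
    exact Real.rpow_le_rpow_of_exponent_le hb hx.2
  refine le_setAverage_of_ae_le hs₀ hs hint ?_
  filter_upwards [hαβ] with x hx
  exact Real.rpow_le_rpow_of_exponent_le hb hx.1

lemma rpow_mul_norm_le_norm_setAverage_rpow_smul {V : Type*} [NormedAddCommGroup V]
    [NormedSpace ℝ V] [CompleteSpace V] {b α β : ℝ} {g : X → ℝ} (hb : 1 ≤ b)
    (hg : Measurable g) (hs₀ : μ s ≠ 0) (hs : μ s ≠ ⊤)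
    (hαβ : ∀ᵐ x ∂μ.restrict s, α ≤ g x ∧ g x ≤ β) (v : V) :
    b ^ α * ‖v‖ ≤ ‖⨍ x in s, b ^ g x • v ∂μ‖ := by
  have hle := rpow_le_setAverage_rpow hb hg hs₀ hs hαβ
  have hpos : 0 ≤ ⨍ x in s, b ^ g x ∂μ := le_trans (by positivity) hle
  rw [setAverage_smul_const, norm_smul, Real.norm_of_nonneg hpos]
  exact mul_le_mul_of_nonneg_right hle (norm_nonneg v)

end Average

lemma min_one_two_rpow_mul_rpow_le {t b e : ℝ} (ht : 0 < t) (htb : t ≤ b) (hbt : b ≤ 2 * t) :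
    min 1 (2 ^ e) * t ^ e ≤ b ^ e := by
  have hte : 0 < t ^ e := Real.rpow_pos_of_pos ht e
  rcases le_or_gt 0 e with he | he
  · calc min 1 (2 ^ e) * t ^ e ≤ 1 * t ^ e := by gcongr; exact min_le_left _ _
      _ ≤ b ^ e := by rw [one_mul]; exact Real.rpow_le_rpow ht.le htb he
  · calc min 1 (2 ^ e) * t ^ e ≤ 2 ^ e * t ^ e := by gcongr; exact min_le_right _ _
      _ = (2 * t) ^ e := (Real.mul_rpow zero_le_two ht.le).symm
      _ ≤ b ^ e := Real.rpow_le_rpow_of_nonpos (by linarith) hbt he.le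

lemma min_one_two_rpow_mul_rpow_le_sq {t b p : ℝ} (ht : 0 < t) (htb : t ≤ b)
    (hbt : b ≤ 2 * t) :
    min 1 (2 ^ (p - 2)) * t ^ p ≤ (b ^ ((p - 2) / 2) * t) ^ 2 := by
  have hb : 0 < b := ht.trans_le htb
  have hsq : (b ^ ((p - 2) / 2)) ^ 2 = b ^ (p - 2) := by
    rw [← Real.rpow_natCast, ← Real.rpow_mul hb.le]
    norm_num
  have htp : t ^ p = t ^ (p - 2) * t ^ 2 := by
    rw [← Real.rpow_natCast, ← Real.rpow_add ht]
    norm_num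
  rw [mul_pow, hsq, htp, ← mul_assoc]
  exact mul_le_mul_of_nonneg_right (min_one_two_rpow_mul_rpow_le ht htb hbt) (by positivity)

theorem stmt19_general (N n : ℕ) (qminus qplus : ℝ) (h1 : 1 < qminus) :
    ∃ c : ℝ, 0 < c ∧
      ∀ E : Set (EuclideanSpace ℝ (Fin n)),
        MeasurableSet E → 0 < volume E → volume E < ⊤ →
        ∀ κ : ℝ, κ ∈ Icc (0:ℝ) 1 →
        ∀ q : EuclideanSpace ℝ (Fin n) → ℝ, Measurable q →
          (∀ᵐ x ∂(volume.restrict E), qminus ≤ q x ∧ q x ≤ qplus) →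
        ∀ Q : EuclideanSpace ℝ (Fin N × Fin n),
          ‖Q‖ ^ qminus ≤
            c * (‖⨍ x in E, ((κ + ‖Q‖) ^ ((q x - 2) / 2)) • Q‖ ^ 2 + 1) := by
  set m : ℝ := min 1 (2 ^ (qminus - 2))
  have hm : 0 < m := lt_min one_pos (by positivity)
  have hc : 1 ≤ m⁻¹ := (one_le_inv₀ hm).2 (min_le_left _ _)
  refine ⟨m⁻¹, inv_pos.2 hm, ?_⟩
  intro E _ hE₀ hE κ ⟨hκ₀, hκ₁⟩ q hq hqE Q
  set A := ‖⨍ x in E, ((κ + ‖Q‖) ^ ((q x - 2) / 2)) • Q‖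
  rcases lt_or_ge ‖Q‖ 1 with hQ | hQ
  · calc ‖Q‖ ^ qminus ≤ 1 := Real.rpow_le_one (norm_nonneg Q) hQ.le (by linarith)
      _ ≤ m⁻¹ * (A ^ 2 + 1) :=
        one_le_mul_of_one_le_of_one_le hc (le_add_of_nonneg_left (sq_nonneg A))
  have hb : 1 ≤ κ + ‖Q‖ := by linarith
  have hweight : (κ + ‖Q‖) ^ ((qminus - 2) / 2) * ‖Q‖ ≤ A :=
    rpow_mul_norm_le_norm_setAverage_rpow_smul (β := (qplus - 2) / 2)
      (g := fun x ↦ (q x - 2) / 2) hb ((hq.sub_const 2).div_const 2) hE₀.ne' hE.ne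
      (hqE.mono fun x hx ↦ ⟨by linarith [hx.1], by linarith [hx.2]⟩) Q
  have hkey : m * ‖Q‖ ^ qminus ≤ A ^ 2 :=
    (min_one_two_rpow_mul_rpow_le_sq (by linarith) (by linarith) (by linarith)).trans
      (pow_le_pow_left₀ (by positivity) hweight 2)
  calc ‖Q‖ ^ qminus = m⁻¹ * (m * ‖Q‖ ^ qminus) := by field_simp
    _ ≤ m⁻¹ * (A ^ 2 + 1) := by gcongr; linarith [sq_nonneg A]

/-- (Estimate (fQ4): `|Q|^{q⁻}` is controlled by the averaged `F`.)
Let `E ⊂ ℝⁿ` be measurable with `0 < |E| < ∞`, `κ ∈ [0,1]`, and `q : E → (1,∞)`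
measurable with `1 < q⁻ ≤ q⁺ < ∞`. Then there is `c > 0` depending only on `q⁻` and `q⁺`
such that for every matrix `Q`:
`|Q|^{q⁻} ≤ c (|⨍_E (κ + |Q|)^{(q(x)−2)/2} Q dx|² + 1)`. -/
theorem stmt19 (N n : ℕ) (qminus qplus : ℝ) (h1 : 1 < qminus) (h2 : qminus ≤ qplus) :
    ∃ c : ℝ, 0 < c ∧
      ∀ E : Set (EuclideanSpace ℝ (Fin n)),
        MeasurableSet E → 0 < volume E → volume E < ⊤ →
        ∀ κ : ℝ, κ ∈ Icc (0:ℝ) 1 →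
        ∀ q : EuclideanSpace ℝ (Fin n) → ℝ, Measurable q →
          (∀ᵐ x ∂(volume.restrict E), qminus ≤ q x ∧ q x ≤ qplus) →
        ∀ Q : EuclideanSpace ℝ (Fin N × Fin n),
          ‖Q‖ ^ qminus ≤
            c * (‖⨍ x in E, ((κ + ‖Q‖) ^ ((q x - 2) / 2)) • Q‖ ^ 2 + 1) :=
  stmt19_general N n qminus qplus h1
end
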